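/- arXiv:1112.1590 — 3 statements merged into one kernel-verified Lean document; each statement's English description precedes it below -/
import Mathlib

section
/- Let β : [0,∞) → [0,∞) be continuous with ∫₀^∞ β = ∞, and let μ ≥ 0 with β not identically zero. Then there exists a unique real λ satisfying 1 = 2∫₀^∞ β(a)·exp(-∫₀^a (β(a') + μ + λ) da') da, and if μ = 0 this λ is strictly positive. -/
open MeasureTheory Filter Set
open Topology

noncomputable def elb (β : ℝ → ℝ) : ℝ → ℝ := fun a => β (max a 0)
noncomputable def elB (β : ℝ → ℝ) : ℝ → ℝ := fun a => ∫ x in (0:ℝ)..a, elb β x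
noncomputable def elf (β : ℝ → ℝ) (c : ℝ) : ℝ → ℝ :=
  fun a => elb β a * Real.exp (-(elB β a + c * a))
noncomputable def elG (β : ℝ → ℝ) (c : ℝ) : ℝ := ∫ a in Set.Ioi (0:ℝ), elf β c a

lemma elb_cont {β : ℝ → ℝ} (hcont : ContinuousOn β (Set.Ici 0)) : Continuous (elb β) := by
  have h : ContinuousOn (elb β) univ := by
    apply hcont.comp ((continuous_id.max continuous_const).continuousOn)
    intro x _; exact mem_Ici.2 (le_max_right _ _)
  rwa [continuousOn_univ] at h

lemma elb_nn {β : ℝ → ℝ} (hnn : ∀ a, 0 ≤ a → 0 ≤ β a) : ∀ a, 0 ≤ elb β a :=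
  fun a => hnn _ (le_max_right _ _)

lemma elb_eq {β : ℝ → ℝ} {a : ℝ} (ha : 0 ≤ a) : elb β a = β a := by
  simp [elb, max_eq_left ha]

lemma elB_deriv {β : ℝ → ℝ} (hcont : ContinuousOn β (Set.Ici 0)) (a : ℝ) :
    HasDerivAt (elB β) (elb β a) a :=
  ((elb_cont hcont).integral_hasStrictDerivAt 0 a).hasDerivAt

lemma elB_eq {β : ℝ → ℝ} {a : ℝ} (ha : 0 ≤ a) :
    elB β a = ∫ x in (0:ℝ)..a, β x := by
  apply intervalIntegral.integral_congr
  intro x hx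
  rw [uIcc_of_le ha] at hx
  exact elb_eq hx.1

lemma elB_nn {β : ℝ → ℝ} (hnn : ∀ a, 0 ≤ a → 0 ≤ β a) {a : ℝ} (ha : 0 ≤ a) :
    0 ≤ elB β a :=
  intervalIntegral.integral_nonneg ha (fun x _ => elb_nn hnn x)

lemma elB_zero (β : ℝ → ℝ) : elB β 0 = 0 := intervalIntegral.integral_same

lemma elB_top {β : ℝ → ℝ}
    (hdiv : Tendsto (fun a => ∫ x in (0:ℝ)..a, β x) atTop atTop) :
    Tendsto (elB β) atTop atTop := by
  apply hdiv.congr'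
  filter_upwards [eventually_ge_atTop (0:ℝ)] with a ha
  exact (elB_eq ha).symm

lemma elB_cont {β : ℝ → ℝ} (hcont : ContinuousOn β (Set.Ici 0)) : Continuous (elB β) :=
  continuous_iff_continuousAt.2 fun a => (elB_deriv hcont a).continuousAt

lemma elphi_cont {β : ℝ → ℝ} (hcont : ContinuousOn β (Set.Ici 0)) (c : ℝ) :
    Continuous (fun x => (elb β x + c) * Real.exp (-(elB β x + c * x))) := by
  have hb := elb_cont hcont
  have hB := elB_cont hcont
  fun_prop

lemma elf_cont {β : ℝ → ℝ} (hcont : ContinuousOn β (Set.Ici 0)) (c : ℝ) :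
    Continuous (elf β c) := by
  have hb := elb_cont hcont
  have hB := elB_cont hcont
  unfold elf
  fun_prop

lemma elFTC {β : ℝ → ℝ} (hcont : ContinuousOn β (Set.Ici 0)) (c T : ℝ) :
    ∫ x in (0:ℝ)..T, (elb β x + c) * Real.exp (-(elB β x + c * x))
      = 1 - Real.exp (-(elB β T + c * T)) := by
  have hD : ∀ x : ℝ, HasDerivAt (fun y => -Real.exp (-(elB β y + c * y)))
      ((elb β x + c) * Real.exp (-(elB β x + c * x))) x := by
    intro x
    have h1 : HasDerivAt (fun y => elB β y + c * y) (elb β x + c) x := by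
      have := (elB_deriv hcont x).add ((hasDerivAt_id x).const_mul c)
      rw [mul_one] at this; exact this
    have h2 := (h1.neg).exp.neg
    refine h2.congr_deriv ?_
    simp only [Pi.neg_apply]; ring
  rw [intervalIntegral.integral_eq_sub_of_hasDerivAt (fun x _ => hD x)
    ((elphi_cont hcont c).intervalIntegrable 0 T)]
  rw [elB_zero]; norm_num; ring_nf

lemma elArg_top {β : ℝ → ℝ}
    (hdiv : Tendsto (fun a => ∫ x in (0:ℝ)..a, β x) atTop atTop) {c : ℝ} (hc : 0 ≤ c) :
    Tendsto (fun T => elB β T + c * T) atTop atTop := by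
  apply Tendsto.atTop_add_zero_eventuallyLE (elB_top hdiv)
  filter_upwards [eventually_ge_atTop (0:ℝ)] with T hT
  positivity

lemma elFTC_tendsto {β : ℝ → ℝ} (hcont : ContinuousOn β (Set.Ici 0))
    (hdiv : Tendsto (fun a => ∫ x in (0:ℝ)..a, β x) atTop atTop) {c : ℝ} (hc : 0 ≤ c) :
    Tendsto (fun T => ∫ x in (0:ℝ)..T, (elb β x + c) * Real.exp (-(elB β x + c * x)))
      atTop (𝓝 1) := by
  have h0 : Tendsto (fun T => Real.exp (-(elB β T + c * T))) atTop (𝓝 0) := by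
    exact Real.tendsto_exp_neg_atTop_nhds_zero.comp (elArg_top hdiv hc)
  have h1 : Tendsto (fun T => (1:ℝ) - Real.exp (-(elB β T + c * T))) atTop (𝓝 (1 - 0)) :=
    tendsto_const_nhds.sub h0
  rw [sub_zero] at h1
  apply h1.congr'
  filter_upwards with T
  exact (elFTC hcont c T).symm

lemma elFull_int {β : ℝ → ℝ} (hcont : ContinuousOn β (Set.Ici 0))
    (hnn : ∀ a, 0 ≤ a → 0 ≤ β a)
    (hdiv : Tendsto (fun a => ∫ x in (0:ℝ)..a, β x) atTop atTop) {c : ℝ} (hc : 0 ≤ c) :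
    IntegrableOn (fun a => (elb β a + c) * Real.exp (-(elB β a + c * a))) (Ioi 0) ∧
      ∫ a in Set.Ioi (0:ℝ), (elb β a + c) * Real.exp (-(elB β a + c * a)) = 1 := by
  set φ : ℝ → ℝ := fun a => (elb β a + c) * Real.exp (-(elB β a + c * a)) with hφ
  have hφnn : ∀ x, 0 ≤ φ x := fun x => by
    have := elb_nn hnn x; positivity
  have hnorm : (fun x => ‖φ x‖) = φ := funext fun x => Real.norm_of_nonneg (hφnn x)
  have hint : IntegrableOn φ (Ioi 0) := by
    apply integrableOn_Ioi_of_intervalIntegral_norm_tendsto 1 0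
      (fun i : ℝ => ((elphi_cont hcont c).integrableOn_Ioc)) tendsto_id
    rw [hnorm]
    exact elFTC_tendsto hcont hdiv hc
  refine ⟨hint, tendsto_nhds_unique ?_ (elFTC_tendsto hcont hdiv hc)⟩
  exact intervalIntegral_tendsto_integral_Ioi 0 hint tendsto_id

lemma elf_le_full {β : ℝ → ℝ} (hnn : ∀ a, 0 ≤ a → 0 ≤ β a) {c : ℝ} (hc : 0 ≤ c) (a : ℝ) :
    elf β c a ≤ (elb β a + c) * Real.exp (-(elB β a + c * a)) := by
  have hb := elb_nn hnn a
  have he : (0:ℝ) < Real.exp (-(elB β a + c * a)) := Real.exp_pos _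
  unfold elf
  nlinarith

lemma elf_nn {β : ℝ → ℝ} (hnn : ∀ a, 0 ≤ a → 0 ≤ β a) (c a : ℝ) : 0 ≤ elf β c a := by
  have hb := elb_nn hnn a
  have he : (0:ℝ) < Real.exp (-(elB β a + c * a)) := Real.exp_pos _
  unfold elf; positivity

lemma elf_int {β : ℝ → ℝ} (hcont : ContinuousOn β (Set.Ici 0))
    (hnn : ∀ a, 0 ≤ a → 0 ≤ β a)
    (hdiv : Tendsto (fun a => ∫ x in (0:ℝ)..a, β x) atTop atTop) {c : ℝ} (hc : 0 ≤ c) :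
    IntegrableOn (elf β c) (Ioi 0) := by
  apply Integrable.mono (elFull_int hcont hnn hdiv hc).1
    ((elf_cont hcont c).aestronglyMeasurable.restrict)
  filter_upwards with a
  rw [Real.norm_of_nonneg (elf_nn hnn c a)]
  refine le_trans (elf_le_full hnn hc a) (le_of_eq ?_)
  exact (Real.norm_of_nonneg (by have := elb_nn hnn a; positivity)).symm

lemma elG_zero {β : ℝ → ℝ} (hcont : ContinuousOn β (Set.Ici 0))
    (hnn : ∀ a, 0 ≤ a → 0 ≤ β a)
    (hdiv : Tendsto (fun a => ∫ x in (0:ℝ)..a, β x) atTop atTop) :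
    elG β 0 = 1 := by
  have h : elf β 0 = fun a => (elb β a + 0) * Real.exp (-(elB β a + 0 * a)) := by
    funext a; simp [elf]
  rw [elG, h]
  exact (elFull_int hcont hnn hdiv le_rfl).2

lemma elb_pos_interval {β : ℝ → ℝ} (hcont : ContinuousOn β (Set.Ici 0))
    (hnn : ∀ a, 0 ≤ a → 0 ≤ β a) (hne : ∃ a, 0 ≤ a ∧ β a ≠ 0) :
    ∃ u v : ℝ, u < v ∧ Ioo u v ⊆ Ioi (0:ℝ) ∧ ∀ x ∈ Ioo u v, 0 < elb β x := by
  obtain ⟨a₀, ha₀, hβa₀⟩ := hne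
  have hba₀ : 0 < elb β a₀ := by
    rw [elb_eq ha₀]; exact lt_of_le_of_ne (hnn _ ha₀) (Ne.symm hβa₀)
  have hopen : IsOpen ((elb β) ⁻¹' Ioi 0) := isOpen_Ioi.preimage (elb_cont hcont)
  obtain ⟨δ, hδ, hball⟩ := Metric.isOpen_iff.1 hopen a₀ hba₀
  refine ⟨max (a₀ - δ) (a₀ / 2), a₀ + δ, ?_, ?_, ?_⟩
  · exact max_lt (by linarith) (by linarith)
  · intro x hx
    have h1 : a₀ / 2 < x := lt_of_le_of_lt (le_max_right _ _) hx.1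
    have : (0:ℝ) ≤ a₀ / 2 := by linarith
    exact mem_Ioi.2 (by linarith)
  · intro x hx
    have h1 : a₀ - δ < x := lt_of_le_of_lt (le_max_left _ _) hx.1
    have h2 := hx.2
    have : x ∈ Metric.ball a₀ δ := by
      rw [Metric.mem_ball, Real.dist_eq, abs_lt]; constructor <;> linarith
    exact hball this

lemma elG_strict_anti {β : ℝ → ℝ} (hcont : ContinuousOn β (Set.Ici 0))
    (hnn : ∀ a, 0 ≤ a → 0 ≤ β a)
    (hdiv : Tendsto (fun a => ∫ x in (0:ℝ)..a, β x) atTop atTop)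
    (hne : ∃ a, 0 ≤ a ∧ β a ≠ 0)
    {c₁ c₂ : ℝ} (h1 : 0 ≤ c₁) (h12 : c₁ < c₂) : elG β c₂ < elG β c₁ := by
  have h2 : (0:ℝ) ≤ c₂ := le_of_lt (lt_of_le_of_lt h1 h12)
  have hi1 := elf_int hcont hnn hdiv h1
  have hi2 := elf_int hcont hnn hdiv h2
  have hsub : elG β c₁ - elG β c₂ = ∫ a in Set.Ioi (0:ℝ), (elf β c₁ a - elf β c₂ a) :=
    (integral_sub hi1 hi2).symm
  have hkey : 0 < ∫ a in Set.Ioi (0:ℝ), (elf β c₁ a - elf β c₂ a) := by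
    have hle : ∀ a ∈ Ioi (0:ℝ), elf β c₂ a ≤ elf β c₁ a := by
      intro a ha
      have hb := elb_nn hnn a
      have : Real.exp (-(elB β a + c₂ * a)) ≤ Real.exp (-(elB β a + c₁ * a)) := by
        apply Real.exp_le_exp.2
        have : c₁ * a ≤ c₂ * a := by nlinarith [mem_Ioi.1 ha]
        linarith
      exact mul_le_mul_of_nonneg_left this hb
    rw [setIntegral_pos_iff_support_of_nonneg_ae]
    · obtain ⟨u, v, huv, hsub', hpos⟩ := elb_pos_interval hcont hnn hne
      have hIoo : Ioo u v ⊆ Function.support (fun a => elf β c₁ a - elf β c₂ a) ∩ Ioi 0 := by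
        intro x hx
        refine ⟨?_, hsub' hx⟩
        have hx0 : (0:ℝ) < x := hsub' hx
        have hbx := hpos x hx
        have hexp : Real.exp (-(elB β x + c₂ * x)) < Real.exp (-(elB β x + c₁ * x)) := by
          apply Real.exp_lt_exp.2
          have : c₁ * x < c₂ * x := by nlinarith
          linarith
        have : elf β c₂ x < elf β c₁ x := by
          unfold elf; exact mul_lt_mul_of_pos_left hexp hbx
        simp only [Function.mem_support]
        intro hcontra
        rw [sub_eq_zero] at hcontra
        exact absurd hcontra (ne_of_gt this)
      calc (0:ENNReal) < volume (Ioo u v) := by rw [Real.volume_Ioo]; simp [huv]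
        _ ≤ _ := measure_mono hIoo
    · rw [EventuallyLE, ae_restrict_iff' measurableSet_Ioi]
      filter_upwards with a ha
      simpa using sub_nonneg.2 (hle a ha)
    · exact hi1.sub hi2
  linarith

lemma elG_nonsolution_nonpos {β : ℝ → ℝ} (hcont : ContinuousOn β (Set.Ici 0))
    (hnn : ∀ a, 0 ≤ a → 0 ≤ β a)
    (hdiv : Tendsto (fun a => ∫ x in (0:ℝ)..a, β x) atTop atTop)
    {c : ℝ} (hc : c ≤ 0) : (1:ℝ) ≠ 2 * elG β c := by
  intro h
  by_cases hint : IntegrableOn (elf β c) (Ioi 0)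
  · have hmono : elG β 0 ≤ elG β c := by
      apply setIntegral_mono_on (elf_int hcont hnn hdiv le_rfl) hint measurableSet_Ioi
      intro a ha
      have hb := elb_nn hnn a
      have : Real.exp (-(elB β a + 0 * a)) ≤ Real.exp (-(elB β a + c * a)) := by
        apply Real.exp_le_exp.2
        have : c * a ≤ 0 * a := by nlinarith [mem_Ioi.1 ha]
        linarith
      exact mul_le_mul_of_nonneg_left this hb
    rw [elG_zero hcont hnn hdiv] at hmono
    linarith
  · have : elG β c = 0 := integral_undef hint
    rw [this] at h
    norm_num at h

lemma elG_continuousAt {β : ℝ → ℝ} (hcont : ContinuousOn β (Set.Ici 0))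
    (hnn : ∀ a, 0 ≤ a → 0 ≤ β a)
    (hdiv : Tendsto (fun a => ∫ x in (0:ℝ)..a, β x) atTop atTop)
    {c₀ : ℝ} (hc₀ : 0 < c₀) : ContinuousAt (elG β) c₀ := by
  apply continuousAt_of_dominated (bound := elf β 0)
  · filter_upwards with c
    exact (elf_cont hcont c).aestronglyMeasurable.restrict
  · filter_upwards [isOpen_Ioi.mem_nhds (mem_Ioi.2 hc₀)] with c hc
    rw [ae_restrict_iff' measurableSet_Ioi]
    filter_upwards with a ha
    rw [Real.norm_of_nonneg (elf_nn hnn c a)]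
    have hb := elb_nn hnn a
    have : Real.exp (-(elB β a + c * a)) ≤ Real.exp (-(elB β a + 0 * a)) := by
      apply Real.exp_le_exp.2
      have : 0 * a ≤ c * a := by nlinarith [mem_Ioi.1 ha, mem_Ioi.1 hc]
      linarith
    exact mul_le_mul_of_nonneg_left this hb
  · exact elf_int hcont hnn hdiv le_rfl
  · filter_upwards with a
    have hb : Continuous (fun c : ℝ => elf β c a) := by
      unfold elf; fun_prop
    exact hb.continuousAt

lemma elG_exists_ge_half {β : ℝ → ℝ} (hcont : ContinuousOn β (Set.Ici 0))
    (hnn : ∀ a, 0 ≤ a → 0 ≤ β a)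
    (hdiv : Tendsto (fun a => ∫ x in (0:ℝ)..a, β x) atTop atTop) :
    ∃ c : ℝ, 0 < c ∧ 1 / 2 ≤ elG β c := by
  obtain ⟨A, hA4, hA0⟩ :=
    (((elB_top hdiv).eventually_ge_atTop 4).and (eventually_gt_atTop (0:ℝ))).exists
  set c : ℝ := 1 / (5 * A) with hc_def
  have hc : 0 < c := by positivity
  have hcA : c * A = 1 / 5 := by
    rw [hc_def]; field_simp
  refine ⟨c, hc, ?_⟩
  have step1 : ∫ a in Set.Ioc (0:ℝ) A, elf β c a ≤ elG β c := by
    apply setIntegral_mono_set (elf_int hcont hnn hdiv hc.le)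
    · filter_upwards with a; exact elf_nn hnn c a
    · exact HasSubset.Subset.eventuallyLE Ioc_subset_Ioi_self
  have step2 : (∫ x in (0:ℝ)..A, elf β c x) = ∫ a in Set.Ioc (0:ℝ) A, elf β c a :=
    intervalIntegral.integral_of_le hA0.le
  have step3 : (∫ x in (0:ℝ)..A, Real.exp (-(c * A)) *
      ((elb β x + 0) * Real.exp (-(elB β x + 0 * x)))) ≤ ∫ x in (0:ℝ)..A, elf β c x := by
    apply intervalIntegral.integral_mono_on hA0.le
    · apply Continuous.intervalIntegrable
      have h := elphi_cont hcont (β := β) 0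
      fun_prop
    · exact (elf_cont hcont c).intervalIntegrable 0 A
    · intro x hx
      have hb := elb_nn hnn x
      have hexp : Real.exp (-(c * A)) * Real.exp (-(elB β x + 0 * x)) ≤
          Real.exp (-(elB β x + c * x)) := by
        rw [← Real.exp_add]
        apply Real.exp_le_exp.2
        have hcx : c * x ≤ c * A := by nlinarith [hx.2]
        linarith
      calc Real.exp (-(c * A)) * ((elb β x + 0) * Real.exp (-(elB β x + 0 * x)))
          = elb β x * (Real.exp (-(c * A)) * Real.exp (-(elB β x + 0 * x))) := by ring
        _ ≤ elb β x * Real.exp (-(elB β x + c * x)) := mul_le_mul_of_nonneg_left hexp hb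
        _ = elf β c x := rfl
  have step4 : (∫ x in (0:ℝ)..A, Real.exp (-(c * A)) *
      ((elb β x + 0) * Real.exp (-(elB β x + 0 * x))))
      = Real.exp (-(c * A)) * (1 - Real.exp (-(elB β A + 0 * A))) := by
    rw [intervalIntegral.integral_const_mul, elFTC hcont 0 A]
  have hnum1 : (4:ℝ) / 5 ≤ Real.exp (-(c * A)) := by
    rw [hcA]
    have := Real.add_one_le_exp (-(1/5) : ℝ)
    linarith
  have hnum2 : Real.exp (-(elB β A + 0 * A)) ≤ 1 / 5 := by
    have h5 : (5:ℝ) ≤ Real.exp 4 := by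
      have := Real.add_one_le_exp (4:ℝ); linarith
    have h1 : Real.exp (-(elB β A + 0 * A)) ≤ Real.exp (-4 : ℝ) :=
      Real.exp_le_exp.2 (by linarith)
    have h2 : Real.exp (-4 : ℝ) ≤ 1 / 5 := by
      rw [Real.exp_neg, inv_eq_one_div]
      exact one_div_le_one_div_of_le (by norm_num) h5
    linarith
  have hexp_le_one : Real.exp (-(c * A)) ≤ 1 := by
    apply Real.exp_le_one_iff.2; nlinarith
  calc (1:ℝ) / 2 ≤ (4 / 5) * (1 - 1 / 5) := by norm_num
    _ ≤ Real.exp (-(c * A)) * (1 - Real.exp (-(elB β A + 0 * A))) := by nlinarith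
    _ ≤ elG β c := by rw [← step4] at *; linarith [step1, step2 ▸ step3]

lemma elG_exists_le_half {β : ℝ → ℝ} (hcont : ContinuousOn β (Set.Ici 0))
    (hnn : ∀ a, 0 ≤ a → 0 ≤ β a)
    (hdiv : Tendsto (fun a => ∫ x in (0:ℝ)..a, β x) atTop atTop) :
    ∃ c : ℝ, 0 < c ∧ elG β c ≤ 1 / 2 := by
  obtain ⟨x₀, hx₀, hM⟩ := isCompact_Icc.exists_isMaxOn (⟨0, by norm_num⟩ :
    (Icc (0:ℝ) 1).Nonempty) ((elb_cont hcont).continuousOn)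
  set M : ℝ := elb β x₀ with hM_def
  have hM0 : 0 ≤ M := elb_nn hnn x₀
  set δ : ℝ := 1 / (8 * (M + 1)) with hδ_def
  have hδ : 0 < δ := by positivity
  have hδ1 : δ ≤ 1 := by
    rw [hδ_def]
    rw [div_le_one (by positivity)]
    nlinarith
  set c : ℝ := 3 / δ with hc_def
  have hc : 0 < c := by positivity
  have hcδ : c * δ = 3 := by
    rw [hc_def]; field_simp
  refine ⟨c, hc, ?_⟩
  have hint := elf_int hcont hnn hdiv hc.le
  have hint1 : IntegrableOn (elf β c) (Ioc 0 δ) := hint.mono_set Ioc_subset_Ioi_self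
  have hint2 : IntegrableOn (elf β c) (Ioi δ) := hint.mono_set (Ioi_subset_Ioi hδ.le)
  have hsplit : elG β c = (∫ a in Set.Ioc (0:ℝ) δ, elf β c a) + ∫ a in Set.Ioi δ, elf β c a := by
    rw [elG, ← Ioc_union_Ioi_eq_Ioi hδ.le,
      setIntegral_union (Ioc_disjoint_Ioi le_rfl) measurableSet_Ioi hint1 hint2]
  have hbound1 : (∫ a in Set.Ioc (0:ℝ) δ, elf β c a) ≤ M * δ := by
    have h1 : (∫ a in Set.Ioc (0:ℝ) δ, elf β c a) ≤ ∫ _ in Set.Ioc (0:ℝ) δ, M := by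
      apply setIntegral_mono_on hint1 (integrableOn_const (by
        rw [Real.volume_Ioc]; exact ENNReal.ofReal_ne_top)) measurableSet_Ioc
      intro x hx
      have hxIcc : x ∈ Icc (0:ℝ) 1 := ⟨hx.1.le, le_trans hx.2 hδ1⟩
      have hbM : elb β x ≤ M := hM hxIcc
      have hexp : Real.exp (-(elB β x + c * x)) ≤ 1 := by
        apply Real.exp_le_one_iff.2
        have h1 := elB_nn hnn hx.1.le
        have h2 : 0 ≤ c * x := mul_nonneg hc.le hx.1.le
        linarith
      have hb := elb_nn hnn x
      calc elf β c x ≤ elb β x * 1 := mul_le_mul_of_nonneg_left hexp hb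
        _ = elb β x := mul_one _
        _ ≤ M := hbM
    rw [setIntegral_const] at h1
    rw [measureReal_def, Real.volume_Ioc] at h1
    rw [smul_eq_mul, ENNReal.toReal_ofReal (by linarith)] at h1
    calc (∫ a in Set.Ioc (0:ℝ) δ, elf β c a) ≤ (δ - 0) * M := h1
      _ = M * δ := by ring
  have hbound2 : (∫ a in Set.Ioi δ, elf β c a) ≤ Real.exp (-(c * δ)) := by
    have h1 : (∫ a in Set.Ioi δ, elf β c a) ≤
        ∫ a in Set.Ioi δ, Real.exp (-(c * δ)) * elf β 0 a := by
      apply setIntegral_mono_on hint2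
        (((elf_int hcont hnn hdiv le_rfl).mono_set (Ioi_subset_Ioi hδ.le)).const_mul _)
        measurableSet_Ioi
      intro x hx
      have hxδ : δ < x := mem_Ioi.1 hx
      have hb := elb_nn hnn x
      have hexp : Real.exp (-(elB β x + c * x)) ≤
          Real.exp (-(c * δ)) * Real.exp (-(elB β x + 0 * x)) := by
        rw [← Real.exp_add]
        apply Real.exp_le_exp.2
        have : c * δ ≤ c * x := by nlinarith
        linarith
      calc elf β c x ≤ elb β x * (Real.exp (-(c * δ)) * Real.exp (-(elB β x + 0 * x))) :=
            mul_le_mul_of_nonneg_left hexp hb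
        _ = Real.exp (-(c * δ)) * elf β 0 x := by unfold elf; ring
    rw [integral_const_mul] at h1
    have h2 : (∫ a in Set.Ioi δ, elf β 0 a) ≤ ∫ a in Set.Ioi (0:ℝ), elf β 0 a := by
      apply setIntegral_mono_set (elf_int hcont hnn hdiv le_rfl)
      · filter_upwards with a; exact elf_nn hnn 0 a
      · exact HasSubset.Subset.eventuallyLE (Ioi_subset_Ioi hδ.le)
    have h3 : (∫ a in Set.Ioi (0:ℝ), elf β 0 a) = 1 := elG_zero hcont hnn hdiv
    have hepos : (0:ℝ) < Real.exp (-(c * δ)) := Real.exp_pos _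
    calc (∫ a in Set.Ioi δ, elf β c a) ≤ Real.exp (-(c * δ)) * ∫ a in Set.Ioi δ, elf β 0 a := h1
      _ ≤ Real.exp (-(c * δ)) * 1 := by
          apply mul_le_mul_of_nonneg_left _ hepos.le
          rw [← h3]; exact h2
      _ = Real.exp (-(c * δ)) := mul_one _
  have hMδ : M * δ ≤ 1 / 8 := by
    rw [hδ_def]
    rw [mul_one_div, div_le_div_iff₀ (by positivity) (by norm_num)]
    nlinarith
  have hexp3 : Real.exp (-(c * δ)) ≤ 1 / 4 := by
    rw [hcδ]
    have h4 : (4:ℝ) ≤ Real.exp 3 := by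
      have := Real.add_one_le_exp (3:ℝ); linarith
    have h2 : Real.exp (-3 : ℝ) ≤ 1 / 4 := by
      rw [Real.exp_neg, inv_eq_one_div]
      exact one_div_le_one_div_of_le (by norm_num) h4
    exact h2
  linarith [hsplit, hbound1, hbound2]

lemma el_bridge {β : ℝ → ℝ} (hcont : ContinuousOn β (Set.Ici 0)) (μ lam : ℝ) :
    (∫ a in Set.Ioi (0:ℝ), β a * Real.exp (-∫ x in (0:ℝ)..a, (β x + μ + lam)))
      = elG β (μ + lam) := by
  rw [elG]
  apply setIntegral_congr_fun measurableSet_Ioi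
  intro a ha
  have ha0 : (0:ℝ) ≤ a := (mem_Ioi.1 ha).le
  have hib : IntervalIntegrable β volume 0 a := by
    apply ContinuousOn.intervalIntegrable
    apply hcont.mono
    rw [uIcc_of_le ha0]
    exact fun x hx => hx.1
  have hsum : (∫ x in (0:ℝ)..a, (β x + μ + lam)) = elB β a + (μ + lam) * a := by
    have h1 : (fun x => β x + μ + lam) = fun x => β x + (μ + lam) := by
      funext x; ring
    rw [h1, intervalIntegral.integral_add hib (intervalIntegrable_const),
      intervalIntegral.integral_const, elB_eq ha0]
    simp [smul_eq_mul]
    ring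
  beta_reduce
  rw [hsum, elf, elb_eq ha0]

theorem euler_lotka_unique_malthusian_parameter
    (β : ℝ → ℝ) (μ : ℝ)
    (hcont : ContinuousOn β (Set.Ici 0)) (hnn : ∀ a, 0 ≤ a → 0 ≤ β a)
    (hdiv : Tendsto (fun a => ∫ x in (0:ℝ)..a, β x) atTop atTop)
    (hμ : 0 ≤ μ) (hne : ∃ a, 0 ≤ a ∧ β a ≠ 0) :
    (∃! lam : ℝ,
      1 = 2 * ∫ a in Set.Ioi (0:ℝ),
        β a * Real.exp (-∫ x in (0:ℝ)..a, (β x + μ + lam))) ∧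
    (μ = 0 → ∀ lam : ℝ,
      (1 = 2 * ∫ a in Set.Ioi (0:ℝ),
        β a * Real.exp (-∫ x in (0:ℝ)..a, (β x + μ + lam))) → 0 < lam) := by
  -- key fact: any solution lam has μ + lam > 0
  have hpos_of_sol : ∀ lam : ℝ,
      (1 = 2 * ∫ a in Set.Ioi (0:ℝ),
        β a * Real.exp (-∫ x in (0:ℝ)..a, (β x + μ + lam))) → 0 < μ + lam := by
    intro lam hlam
    rw [el_bridge hcont] at hlam
    by_contra hle
    exact elG_nonsolution_nonpos hcont hnn hdiv (not_lt.1 hle) hlam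
  constructor
  · -- existence via IVT
    obtain ⟨c₁, hc₁, hG₁⟩ := elG_exists_ge_half hcont hnn hdiv
    obtain ⟨c₂, hc₂, hG₂⟩ := elG_exists_le_half hcont hnn hdiv
    have hc₁₂ : c₁ ≤ c₂ := by
      by_contra h
      push_neg at h
      have := elG_strict_anti hcont hnn hdiv hne hc₂.le h
      linarith
    have hGc : ContinuousOn (elG β) (Icc c₁ c₂) := by
      intro x hx
      exact (elG_continuousAt hcont hnn hdiv (lt_of_lt_of_le hc₁ hx.1)).continuousWithinAt
    have hivt := intermediate_value_Icc' hc₁₂ hGc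
    have hmem : (1:ℝ)/2 ∈ Icc (elG β c₂) (elG β c₁) := ⟨hG₂, hG₁⟩
    obtain ⟨cs, hcs, hGcs⟩ := hivt hmem
    have hcs0 : 0 < cs := lt_of_lt_of_le hc₁ hcs.1
    refine ⟨cs - μ, ?_, ?_⟩
    · beta_reduce
      rw [el_bridge hcont]
      have : μ + (cs - μ) = cs := by ring
      rw [this, hGcs]
      norm_num
    · intro lam' hlam'
      have hpos' := hpos_of_sol lam' hlam'
      rw [el_bridge hcont] at hlam'
      have hGlam' : elG β (μ + lam') = 1/2 := by linarith
      have hceq : μ + lam' = cs := by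
        rcases lt_trichotomy (μ + lam') cs with h | h | h
        · have := elG_strict_anti hcont hnn hdiv hne hpos'.le h
          rw [hGlam', hGcs] at this
          linarith
        · exact h
        · have := elG_strict_anti hcont hnn hdiv hne hcs0.le h
          rw [hGlam', hGcs] at this
          linarith
      linarith
  · intro hμ0 lam hlam
    have := hpos_of_sol lam hlam
    rw [hμ0] at this
    linarith
end

section
/- Let β be continuous nonnegative on [0,∞) with ∫₀^∞ β = ∞, and suppose a population density p(t,a) = p̄₀(a-t)·exp(-∫₀^t β(a-s)ds) for t, a ≥ 0 (extending p̄₀ and β by 0 on negatives), where p̄₀ ≥ 0 is integrable and supported in [0, t₀], and β(a) = 0 for a ∈ [0, t₀]. Define C_T = ∫₀^∞∫₀^T β(a)p(t,a) dt da. Then C_T → ∫₀^∞ p̄₀(a)da as T → ∞. -/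
/-!
Along a characteristic the exponent `∫₀ᵗ β(a - s) ds` is `∫_{a-t}^a β`, and since `β` vanishes on
`[0, t₀] ⊇ supp p̄₀` it equals the full primitive `B(a) = ∫₀^a β` wherever `p̄₀(a - t) ≠ 0`. Hence
`C_T = ∫_{a>0} β(a) e^{-B(a)} ∫_{a-T}^a p̄₀`, and at every age `a > t₀` the inner integral is `∫ p̄₀`
once `T > a`. Dominated convergence gives `C_T → (∫_{a>0} β e^{-B}) ∫ p̄₀`, and the first factor is
`[-e^{-B}]₀^∞ = 1` because `B → ∞`.
-/

open MeasureTheory Filter Set Topology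

noncomputable def divisionAgeDensity (β : ℝ → ℝ) (a : ℝ) : ℝ :=
  β a * Real.exp (-∫ u in (0:ℝ)..a, β u)

section DivisionAgeDensity

variable {β : ℝ → ℝ}

theorem divisionAgeDensity_nonneg (hβ : ∀ a, 0 ≤ β a) (a : ℝ) : 0 ≤ divisionAgeDensity β a :=
  mul_nonneg (hβ a) (Real.exp_pos _).le

theorem hasDerivAt_neg_exp_neg_primitive (hβ : Continuous β) (x : ℝ) :
    HasDerivAt (fun y => -Real.exp (-∫ u in (0:ℝ)..y, β u)) (divisionAgeDensity β x) x := by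
  have hB : HasDerivAt (fun y => ∫ u in (0:ℝ)..y, β u) (β x) x :=
    (hβ.integral_hasStrictDerivAt 0 x).hasDerivAt
  have h : HasDerivAt (fun y => -Real.exp (-∫ u in (0:ℝ)..y, β u))
      (-(Real.exp (-∫ u in (0:ℝ)..x, β u) * -β x)) x := hB.neg.exp.neg
  convert h using 1
  rw [divisionAgeDensity]
  ring

theorem tendsto_neg_exp_neg_primitive
    (hβ : Tendsto (fun a => ∫ x in (0:ℝ)..a, β x) atTop atTop) :
    Tendsto (fun y => -Real.exp (-∫ u in (0:ℝ)..y, β u)) atTop (𝓝 0) := by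
  simpa using (Real.tendsto_exp_neg_atTop_nhds_zero.comp hβ).neg

theorem integrableOn_divisionAgeDensity (hβc : Continuous β) (hβnn : ∀ a, 0 ≤ β a)
    (hβdiv : Tendsto (fun a => ∫ x in (0:ℝ)..a, β x) atTop atTop) :
    IntegrableOn (divisionAgeDensity β) (Ioi 0) :=
  integrableOn_Ioi_deriv_of_nonneg' (fun x _ => hasDerivAt_neg_exp_neg_primitive hβc x)
    (fun x _ => divisionAgeDensity_nonneg hβnn x) (tendsto_neg_exp_neg_primitive hβdiv)

theorem integral_divisionAgeDensity (hβc : Continuous β) (hβnn : ∀ a, 0 ≤ β a)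
    (hβdiv : Tendsto (fun a => ∫ x in (0:ℝ)..a, β x) atTop atTop) :
    ∫ a in Ioi 0, divisionAgeDensity β a = 1 := by
  rw [integral_Ioi_of_hasDerivAt_of_nonneg' (fun x _ => hasDerivAt_neg_exp_neg_primitive hβc x)
    (fun x _ => divisionAgeDensity_nonneg hβnn x) (tendsto_neg_exp_neg_primitive hβdiv)]
  simp

end DivisionAgeDensity

section Transport

variable {β p0 : ℝ → ℝ} {t0 : ℝ}

theorem integral_comp_sub_eq_primitive_of_eqOn_zero
    (hβ : ∀ a b, IntervalIntegrable β volume a b) {a t : ℝ}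
    (hβ0 : EqOn β 0 (uIcc 0 (a - t))) :
    ∫ s in (0:ℝ)..t, β (a - s) = ∫ u in (0:ℝ)..a, β u := by
  rw [intervalIntegral.integral_comp_sub_left, sub_zero,
    ← intervalIntegral.integral_interval_sub_left (hβ 0 a) (hβ 0 (a - t)),
    intervalIntegral.integral_congr hβ0]
  simp

theorem transport_eq_mul_exp_neg_primitive (hβ : ∀ a b, IntervalIntegrable β volume a b)
    (hβ0 : ∀ a, a ≤ t0 → β a = 0) (hp0 : ∀ a, a < 0 ∨ t0 < a → p0 a = 0) (t a : ℝ) :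
    p0 (a - t) * Real.exp (-∫ s in (0:ℝ)..t, β (a - s)) =
      p0 (a - t) * Real.exp (-∫ u in (0:ℝ)..a, β u) := by
  by_cases h : p0 (a - t) = 0
  · simp [h]
  have hlo : 0 ≤ a - t := not_lt.1 fun hneg => h (hp0 _ (Or.inl hneg))
  have hhi : a - t ≤ t0 := not_lt.1 fun hbig => h (hp0 _ (Or.inr hbig))
  rw [integral_comp_sub_eq_primitive_of_eqOn_zero hβ fun x hx =>
    hβ0 x ((uIcc_of_le hlo ▸ hx).2.trans hhi)]

theorem integral_mul_transport (hβ : ∀ a b, IntervalIntegrable β volume a b)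
    (hβ0 : ∀ a, a ≤ t0 → β a = 0) (hp0 : ∀ a, a < 0 ∨ t0 < a → p0 a = 0) (T a : ℝ) :
    ∫ t in (0:ℝ)..T, β a * (p0 (a - t) * Real.exp (-∫ s in (0:ℝ)..t, β (a - s))) =
      divisionAgeDensity β a * ∫ u in (a - T)..a, p0 u := by
  have h : ∀ t, β a * (p0 (a - t) * Real.exp (-∫ s in (0:ℝ)..t, β (a - s))) =
      divisionAgeDensity β a * p0 (a - t) := fun t => by
    rw [transport_eq_mul_exp_neg_primitive hβ hβ0 hp0, divisionAgeDensity]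
    ring
  simp_rw [h, intervalIntegral.integral_const_mul, intervalIntegral.integral_comp_sub_left,
    sub_zero]

end Transport

section TrailingWindow

variable {f : ℝ → ℝ}

theorem continuous_intervalIntegral_sub_const (hf : ∀ a b, IntervalIntegrable f volume a b)
    (T : ℝ) : Continuous fun a => ∫ u in (a - T)..a, f u := by
  have h : (fun a => ∫ u in (a - T)..a, f u) =
      fun a => (∫ u in (0:ℝ)..a, f u) - ∫ u in (0:ℝ)..(a - T), f u :=
    funext fun a => (intervalIntegral.integral_interval_sub_left (hf 0 _) (hf 0 _)).symm
  rw [h]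
  exact (intervalIntegral.continuous_primitive hf 0).sub
    ((intervalIntegral.continuous_primitive hf 0).comp (continuous_id.sub continuous_const))

theorem norm_intervalIntegral_le_integral_norm (hf : Integrable f) (c d : ℝ) :
    ‖∫ u in c..d, f u‖ ≤ ∫ u, ‖f u‖ :=
  intervalIntegral.norm_integral_le_integral_norm_uIoc.trans
    (setIntegral_le_integral hf.norm (ae_of_all _ fun _ => norm_nonneg _))

theorem intervalIntegral_sub_const_eq_integral {t0 a T : ℝ}
    (hf : ∀ x, x < 0 ∨ t0 < x → f x = 0) (ha : t0 ≤ a) (hT : a < T) :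
    ∫ u in (a - T)..a, f u = ∫ u, f u := by
  refine intervalIntegral.integral_eq_integral_of_support_subset fun x hx => ⟨?_, ?_⟩
  · by_contra! h
    exact hx (hf x (Or.inl (by linarith)))
  · by_contra! h
    exact hx (hf x (Or.inr (by linarith)))

theorem tendsto_integral_mul_intervalIntegral_sub_const {μ : Measure ℝ} {g : ℝ → ℝ} {t0 : ℝ}
    (hg : Integrable g μ) (hg0 : ∀ a, a ≤ t0 → g a = 0) (hf : Integrable f)
    (hfsupp : ∀ x, x < 0 ∨ t0 < x → f x = 0) :
    Tendsto (fun T => ∫ a, g a * (∫ u in (a - T)..a, f u) ∂μ) atTop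
      (𝓝 ((∫ a, g a ∂μ) * ∫ u, f u)) := by
  rw [← integral_mul_const]
  refine tendsto_integral_filter_of_dominated_convergence (fun a => ‖g a‖ * ∫ u, ‖f u‖)
    (Eventually.of_forall (f := atTop) fun T => hg.aestronglyMeasurable.mul
      (continuous_intervalIntegral_sub_const (fun _ _ => hf.intervalIntegrable)
        T).aestronglyMeasurable)
    (Eventually.of_forall (f := atTop) fun T => ae_of_all _ fun a => ?_) (hg.norm.mul_const _)
    (ae_of_all _ fun a => ?_)
  · rw [norm_mul]
    exact mul_le_mul_of_nonneg_left (norm_intervalIntegral_le_integral_norm hf _ _)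
      (norm_nonneg _)
  · by_cases ha : a ≤ t0
    · simp [hg0 a ha]
    refine tendsto_const_nhds.congr' ?_
    filter_upwards [eventually_gt_atTop a] with T hT
    rw [intervalIntegral_sub_const_eq_integral hfsupp (not_le.1 ha).le hT]

end TrailingWindow

theorem total_divisions_converges_general
    (β p0 : ℝ → ℝ) (t0 : ℝ)
    (hβc : Continuous β) (hβnn : ∀ a, 0 ≤ β a)
    (hβdiv : Tendsto (fun a => ∫ x in (0:ℝ)..a, β x) atTop atTop)
    (hβ0 : ∀ a, a ≤ t0 → β a = 0)
    (hp0int : Integrable p0)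
    (hp0supp : ∀ a, a < 0 ∨ t0 < a → p0 a = 0)
    (p : ℝ → ℝ → ℝ)
    (hp : ∀ t a, p t a = p0 (a - t) * Real.exp (-∫ s in (0:ℝ)..t, β (a - s))) :
    Tendsto (fun T => ∫ a in Set.Ioi (0:ℝ), ∫ t in (0:ℝ)..T, β a * p t a)
      atTop (nhds (∫ a in Set.Ioi (0:ℝ), p0 a)) := by
  have hp0 : ∫ a in Ioi (0:ℝ), p0 a = ∫ a, p0 a := by
    rw [← integral_Ici_eq_integral_Ioi]
    exact setIntegral_eq_integral_of_forall_compl_eq_zero fun a ha =>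
      hp0supp a (Or.inl (not_le.1 ha))
  simp_rw [hp, integral_mul_transport hβc.intervalIntegrable hβ0 hp0supp]
  have h := tendsto_integral_mul_intervalIntegral_sub_const
    (integrableOn_divisionAgeDensity hβc hβnn hβdiv)
    (fun a ha => by simp [divisionAgeDensity, hβ0 a ha]) hp0int hp0supp
  rwa [integral_divisionAgeDensity hβc hβnn hβdiv, one_mul, ← hp0] at h

theorem total_divisions_converges
    (β p0 : ℝ → ℝ) (t0 : ℝ) (ht0 : 0 < t0)
    (hβc : Continuous β) (hβnn : ∀ a, 0 ≤ β a)
    (hβdiv : Tendsto (fun a => ∫ x in (0:ℝ)..a, β x) atTop atTop)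
    (hβ0 : ∀ a, a ≤ t0 → β a = 0)
    (hp0int : Integrable p0) (hp0nn : ∀ a, 0 ≤ p0 a)
    (hp0supp : ∀ a, a < 0 ∨ t0 < a → p0 a = 0)
    (p : ℝ → ℝ → ℝ)
    (hp : ∀ t a, p t a = p0 (a - t) * Real.exp (-∫ s in (0:ℝ)..t, β (a - s))) :
    Tendsto (fun T => ∫ a in Set.Ioi (0:ℝ), ∫ t in (0:ℝ)..T, β a * p t a)
      atTop (nhds (∫ a in Set.Ioi (0:ℝ), p0 a)) :=
  total_divisions_converges_general β p0 t0 hβc hβnn hβdiv hβ0 hp0int hp0supp p hp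
end

section
/- Under the hypotheses of the previous L¹ convergence theorem, if additionally β(a)·exp(-∫₀^a β(a')da') → 0 as a → ∞, then sup_{a≥0} |I_T(a) - I_∞(a)| → 0 as T → ∞. -/
open MeasureTheory Filter Set
open scoped Topology

/-!
Write `f(a) = β(a) e^{-∫₀^a β}` and `M = ∫ p₀`. Because `p₀` lives on `[0, t₀]`, where `β`
vanishes, `β(a) p(t, a) = f(a) p₀(a - t)`; so the numerator is `f(a) ∫_{a-T}^a p₀` and the
normaliser is `C_T = ∫_{a>0} f(a) ∫_{a-T}^a p₀`. Since `f = 0` on `(-∞, t₀]` and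
`∫_{a-T}^a p₀ = M` for `t₀ < a < T`, we get `|f(a) ∫_{a-T}^a p₀ - M f(a)| ≤ M f(max a T)`,
which tends to `0` uniformly in `a` because `f → 0`. Dominated convergence and `∫ f = 1` give
`C_T → M`, and as `f` is bounded, dividing by `C_T` keeps the convergence uniform.
-/

section WindowIntegral

variable {f : ℝ → ℝ}

theorem integral_Ioi_eq_integral_of_forall_lt_eq_zero (hf : ∀ x < 0, f x = 0) :
    ∫ x in Ioi 0, f x = ∫ x, f x := by
  rw [← integral_Ici_eq_integral_Ioi]
  exact setIntegral_eq_integral_of_forall_compl_eq_zero fun x hx => hf x (not_le.1 hx)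

theorem intervalIntegral_le_integral_of_nonneg (hf : Integrable f) (hf0 : ∀ x, 0 ≤ f x)
    {a b : ℝ} (hab : a ≤ b) : ∫ x in a..b, f x ≤ ∫ x, f x := by
  rw [intervalIntegral.integral_of_le hab]
  exact setIntegral_le_integral hf (Eventually.of_forall hf0)

theorem intervalIntegral_eq_integral_of_forall_notMem {a b : ℝ} (hab : a ≤ b)
    (hf : ∀ x ∉ Ioc a b, f x = 0) : ∫ x in a..b, f x = ∫ x, f x := by
  rw [intervalIntegral.integral_of_le hab]
  exact setIntegral_eq_integral_of_forall_compl_eq_zero hf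

theorem MeasureTheory.Integrable.continuous_intervalIntegral_sub_left (hf : Integrable f) (T : ℝ) :
    Continuous fun a => ∫ u in (a - T)..a, f u := by
  have hF := intervalIntegral.continuous_primitive (fun _ _ => hf.intervalIntegrable) 0
  convert hF.sub (hF.comp (continuous_sub_right T)) using 2 with a
  exact (intervalIntegral.integral_interval_sub_left hf.intervalIntegrable
    hf.intervalIntegrable).symm

end WindowIntegral

theorem Continuous.isBoundedUnder_norm_of_tendsto_zero {f : ℝ → ℝ} (hf : Continuous f)
    (hbot : Tendsto f atBot (𝓝 0)) (htop : Tendsto f atTop (𝓝 0)) :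
    IsBoundedUnder (· ≤ ·) ⊤ fun a => ‖f a‖ := by
  let f₀ : ZeroAtInftyContinuousMap ℝ ℝ :=
    ⟨⟨f, hf⟩, by simpa [cocompact_eq_atBot_atTop] using hbot.sup htop⟩
  obtain ⟨C, hC⟩ := isBounded_iff_forall_norm_le.1 f₀.isBounded_range
  exact isBoundedUnder_of ⟨C, fun a => hC _ (mem_range_self a)⟩

/-- Uniform convergence in the second variable is expressed as convergence along `l ×ˢ ⊤`. -/
theorem tendsto_inv_mul_sub_of_tendsto {ι α : Type*} {l : Filter ι} {c : ι → ℝ}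
    {F : ι → α → ℝ} {f : α → ℝ} {M : ℝ} (hM : M ≠ 0) (hc : Tendsto c l (𝓝 M))
    (hF : Tendsto (fun q : ι × α => F q.1 q.2 - M * f q.2) (l ×ˢ ⊤) (𝓝 0))
    (hf : IsBoundedUnder (· ≤ ·) ⊤ fun a => ‖f a‖) :
    Tendsto (fun q : ι × α => (c q.1)⁻¹ * F q.1 q.2 - f q.2) (l ×ˢ ⊤) (𝓝 0) := by
  have hc' : Tendsto (fun q : ι × α => (c q.1)⁻¹) (l ×ˢ ⊤) (𝓝 M⁻¹) :=
    (hc.inv₀ hM).comp tendsto_fst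
  have hscale : Tendsto (fun q : ι × α => (c q.1)⁻¹ * M - 1) (l ×ˢ ⊤) (𝓝 0) := by
    simpa [hM] using (hc'.mul_const M).sub_const 1
  have h := (hc'.mul hF).add
    (hscale.zero_mul_isBoundedUnder_le (tendsto_snd.isBoundedUnder_comp hf))
  rw [mul_zero, zero_add] at h
  refine h.congr fun q => ?_
  ring

/-- The limit distribution `I_∞` of the paper. -/
noncomputable def hazardDensity (β : ℝ → ℝ) (a : ℝ) : ℝ :=
  β a * Real.exp (-∫ x in (0:ℝ)..a, β x)

namespace hazardDensity

variable {β : ℝ → ℝ}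

theorem nonneg (hβnn : ∀ a, 0 ≤ β a) (a : ℝ) : 0 ≤ hazardDensity β a :=
  mul_nonneg (hβnn a) (Real.exp_pos _).le

theorem eq_zero_of_le {t0 a : ℝ} (hβ0 : ∀ a, a ≤ t0 → β a = 0) (ha : a ≤ t0) :
    hazardDensity β a = 0 := by
  rw [hazardDensity, hβ0 a ha, zero_mul]

theorem continuous (hβc : Continuous β) : Continuous (hazardDensity β) :=
  hβc.mul (Real.continuous_exp.comp (intervalIntegral.continuous_primitive
    (fun u v => hβc.intervalIntegrable u v) 0).neg)

theorem hasDerivAt_neg_exp (hβc : Continuous β) (x : ℝ) :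
    HasDerivAt (fun u => -Real.exp (-∫ t in (0:ℝ)..u, β t)) (hazardDensity β x) x := by
  have hB : HasDerivAt (fun u => ∫ t in (0:ℝ)..u, β t) (β x) x :=
    intervalIntegral.integral_hasDerivAt_right (hβc.intervalIntegrable 0 x)
      hβc.stronglyMeasurable.stronglyMeasurableAtFilter hβc.continuousAt
  have h : HasDerivAt (fun u => -Real.exp (-∫ t in (0:ℝ)..u, β t))
      (-(Real.exp (-∫ t in (0:ℝ)..x, β t) * -β x)) x := hB.neg.exp.neg
  convert h using 1
  simp only [hazardDensity]
  ring

theorem tendsto_neg_exp (hβdiv : Tendsto (fun a => ∫ x in (0:ℝ)..a, β x) atTop atTop) :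
    Tendsto (fun u => -Real.exp (-∫ t in (0:ℝ)..u, β t)) atTop (𝓝 0) := by
  simpa using (Real.tendsto_exp_atBot.comp (tendsto_neg_atTop_atBot.comp hβdiv)).neg

theorem integrableOn_Ioi (hβc : Continuous β) (hβnn : ∀ a, 0 ≤ β a)
    (hβdiv : Tendsto (fun a => ∫ x in (0:ℝ)..a, β x) atTop atTop) :
    IntegrableOn (hazardDensity β) (Ioi 0) :=
  integrableOn_Ioi_deriv_of_nonneg' (fun x _ => hasDerivAt_neg_exp hβc x)
    (fun x _ => nonneg hβnn x) (tendsto_neg_exp hβdiv)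

theorem integral_Ioi (hβc : Continuous β) (hβnn : ∀ a, 0 ≤ β a)
    (hβdiv : Tendsto (fun a => ∫ x in (0:ℝ)..a, β x) atTop atTop) :
    ∫ x in Ioi 0, hazardDensity β x = 1 := by
  rw [integral_Ioi_of_hasDerivAt_of_tendsto' (fun x _ => hasDerivAt_neg_exp hβc x)
    (integrableOn_Ioi hβc hβnn hβdiv) (tendsto_neg_exp hβdiv)]
  simp

theorem tendsto_atBot {t0 : ℝ} (hβ0 : ∀ a, a ≤ t0 → β a = 0) :
    Tendsto (hazardDensity β) atBot (𝓝 0) :=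
  tendsto_const_nhds.congr' <| (eventually_le_atBot t0).mono fun _ ha =>
    (eq_zero_of_le hβ0 ha).symm

end hazardDensity

section Model

variable {β p0 : ℝ → ℝ} {t0 : ℝ}

theorem integral_eq_zero_of_forall_le_eq_zero (hβ0 : ∀ a, a ≤ t0 → β a = 0) {u : ℝ} (hu0 : 0 ≤ u)
    (hut : u ≤ t0) : ∫ x in (0:ℝ)..u, β x = 0 :=
  intervalIntegral.integral_zero_ae <| Eventually.of_forall fun x hx =>
    hβ0 x ((uIoc_of_le hu0 ▸ hx).2.trans hut)

theorem mul_exp_neg_integral_comp_sub_eq_hazardDensity (hβc : Continuous β)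
    (hβ0 : ∀ a, a ≤ t0 → β a = 0) {a t : ℝ} (h0 : 0 ≤ a - t) (ht0 : a - t ≤ t0) :
    β a * Real.exp (-∫ s in (0:ℝ)..t, β (a - s)) = hazardDensity β a := by
  rw [intervalIntegral.integral_comp_sub_left, sub_zero,
    ← intervalIntegral.integral_interval_sub_left (hβc.intervalIntegrable 0 a)
      (hβc.intervalIntegrable 0 (a - t)), integral_eq_zero_of_forall_le_eq_zero hβ0 h0 ht0,
    sub_zero, hazardDensity]

theorem integral_mul_eq_hazardDensity_mul (hβc : Continuous β)
    (hβ0 : ∀ a, a ≤ t0 → β a = 0) (hp0supp : ∀ a, a < 0 ∨ t0 < a → p0 a = 0)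
    {p : ℝ → ℝ → ℝ}
    (hp : ∀ t a, p t a = p0 (a - t) * Real.exp (-∫ s in (0:ℝ)..t, β (a - s))) (T a : ℝ) :
    ∫ t in (0:ℝ)..T, β a * p t a = hazardDensity β a * ∫ u in (a - T)..a, p0 u := by
  have hpt : ∀ t, β a * p t a = hazardDensity β a * p0 (a - t) := by
    intro t
    by_cases h : p0 (a - t) = 0
    · simp [hp, h]
    · obtain ⟨h0, ht0⟩ := not_or.1 (mt (hp0supp _) h)
      rw [hp, ← mul_exp_neg_integral_comp_sub_eq_hazardDensity hβc hβ0 (not_lt.1 h0) (not_lt.1 ht0)]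
      ring
  simp_rw [hpt, intervalIntegral.integral_const_mul, intervalIntegral.integral_comp_sub_left,
    sub_zero]

theorem abs_hazardDensity_mul_sub_le (hβnn : ∀ a, 0 ≤ β a) (hβ0 : ∀ a, a ≤ t0 → β a = 0)
    (hp0int : Integrable p0) (hp0nn : ∀ a, 0 ≤ p0 a)
    (hp0supp : ∀ a, a < 0 ∨ t0 < a → p0 a = 0) {T : ℝ} (hT : 0 ≤ T) (a : ℝ) :
    |hazardDensity β a * (∫ u in (a - T)..a, p0 u) - (∫ x, p0 x) * hazardDensity β a|
      ≤ (∫ x, p0 x) * hazardDensity β (max a T) := by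
  have hM0 : 0 ≤ ∫ x, p0 x := integral_nonneg hp0nn
  rcases le_or_gt a t0 with hat0 | hat0
  · simpa [hazardDensity.eq_zero_of_le hβ0 hat0] using
      mul_nonneg hM0 (hazardDensity.nonneg hβnn _)
  rcases lt_or_ge a T with haT | haT
  · have hQ : ∫ u in (a - T)..a, p0 u = ∫ x, p0 x :=
      intervalIntegral_eq_integral_of_forall_notMem (by linarith) fun x hx =>
        hp0supp x (by grind)
    simpa [hQ, mul_comm] using mul_nonneg hM0 (hazardDensity.nonneg hβnn _)
  have hQ0 : 0 ≤ ∫ u in (a - T)..a, p0 u :=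
    intervalIntegral.integral_nonneg (by linarith) fun u _ => hp0nn u
  have hQM : ∫ u in (a - T)..a, p0 u ≤ ∫ x, p0 x :=
    intervalIntegral_le_integral_of_nonneg hp0int hp0nn (by linarith)
  have hf := hazardDensity.nonneg hβnn a
  rw [max_eq_left haT, abs_le]
  constructor <;> nlinarith

theorem tendsto_hazardDensity_mul_sub (hβnn : ∀ a, 0 ≤ β a) (hβ0 : ∀ a, a ≤ t0 → β a = 0)
    (hp0int : Integrable p0) (hp0nn : ∀ a, 0 ≤ p0 a)
    (hp0supp : ∀ a, a < 0 ∨ t0 < a → p0 a = 0)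
    (hβI0 : Tendsto (hazardDensity β) atTop (𝓝 0)) :
    Tendsto (fun q : ℝ × ℝ => hazardDensity β q.2 * (∫ u in (q.2 - q.1)..q.2, p0 u)
      - (∫ x, p0 x) * hazardDensity β q.2) (atTop ×ˢ ⊤) (𝓝 0) := by
  have hmax : Tendsto (fun q : ℝ × ℝ => max q.2 q.1) (atTop ×ˢ ⊤) atTop :=
    tendsto_atTop_mono (fun q => le_max_right _ _) tendsto_fst
  have hbound := (hβI0.comp hmax).const_mul (∫ x, p0 x)
  rw [mul_zero] at hbound
  refine squeeze_zero_norm' ?_ hbound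
  filter_upwards [tendsto_fst.eventually (eventually_ge_atTop 0)] with q hq
  exact abs_hazardDensity_mul_sub_le hβnn hβ0 hp0int hp0nn hp0supp hq q.2

theorem tendsto_integral_hazardDensity_mul (hβc : Continuous β) (hβnn : ∀ a, 0 ≤ β a)
    (hβdiv : Tendsto (fun a => ∫ x in (0:ℝ)..a, β x) atTop atTop)
    (hβ0 : ∀ a, a ≤ t0 → β a = 0) (hp0int : Integrable p0) (hp0nn : ∀ a, 0 ≤ p0 a)
    (hp0supp : ∀ a, a < 0 ∨ t0 < a → p0 a = 0)
    (hβI0 : Tendsto (hazardDensity β) atTop (𝓝 0)) :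
    Tendsto (fun T => ∫ x in Ioi 0, hazardDensity β x * ∫ u in (x - T)..x, p0 u) atTop
      (𝓝 (∫ x, p0 x)) := by
  have hlim := tendsto_hazardDensity_mul_sub hβnn hβ0 hp0int hp0nn hp0supp hβI0
  have h := tendsto_integral_filter_of_dominated_convergence (μ := volume.restrict (Ioi 0))
    (F := fun T x => hazardDensity β x * ∫ u in (x - T)..x, p0 u)
    (f := fun x => (∫ x, p0 x) * hazardDensity β x) (fun x => (∫ x, p0 x) * hazardDensity β x)
    (Eventually.of_forall fun T => ((hazardDensity.continuous hβc).mul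
      (hp0int.continuous_intervalIntegral_sub_left T)).aestronglyMeasurable)
    ((eventually_ge_atTop 0).mono fun T hT => Eventually.of_forall fun x => by
      have hf := hazardDensity.nonneg hβnn x
      rw [Real.norm_of_nonneg (mul_nonneg hf
        (intervalIntegral.integral_nonneg (by linarith) fun u _ => hp0nn u)), mul_comm]
      exact mul_le_mul_of_nonneg_right
        (intervalIntegral_le_integral_of_nonneg hp0int hp0nn (by linarith)) hf)
    ((hazardDensity.integrableOn_Ioi hβc hβnn hβdiv).const_mul _)
    (Eventually.of_forall fun x =>
      tendsto_sub_nhds_zero_iff.1 (hlim.comp (tendsto_id.prodMk tendsto_top)))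
  rwa [integral_const_mul, hazardDensity.integral_Ioi hβc hβnn hβdiv, mul_one] at h

end Model

theorem imt_distribution_uniform_convergence_general
    (β p0 : ℝ → ℝ) (t0 : ℝ)
    (hβc : Continuous β) (hβnn : ∀ a, 0 ≤ β a)
    (hβdiv : Tendsto (fun a => ∫ x in (0:ℝ)..a, β x) atTop atTop)
    (hβ0 : ∀ a, a ≤ t0 → β a = 0)
    (hp0int : Integrable p0) (hp0nn : ∀ a, 0 ≤ p0 a)
    (hp0supp : ∀ a, a < 0 ∨ t0 < a → p0 a = 0)
    (hp0pos : 0 < ∫ a in Set.Ioi (0:ℝ), p0 a)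
    (p : ℝ → ℝ → ℝ)
    (hp : ∀ t a, p t a = p0 (a - t) * Real.exp (-∫ s in (0:ℝ)..t, β (a - s)))
    (hβI0 : Tendsto (fun a => β a * Real.exp (-∫ x in (0:ℝ)..a, β x))
      atTop (nhds 0)) :
    ∀ ε > (0:ℝ), ∃ T₀ : ℝ, ∀ T ≥ T₀, ∀ a ≥ (0:ℝ),
      |(∫ x in Set.Ioi (0:ℝ), ∫ t in (0:ℝ)..T, β x * p t x)⁻¹ *
          (∫ t in (0:ℝ)..T, β a * p t a)
        - β a * Real.exp (-∫ x in (0:ℝ)..a, β x)| < ε := by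
  intro ε hε
  rw [integral_Ioi_eq_integral_of_forall_lt_eq_zero fun x hx => hp0supp x (.inl hx)] at hp0pos
  have hI := tendsto_inv_mul_sub_of_tendsto hp0pos.ne'
    (F := fun T a => hazardDensity β a * ∫ u in (a - T)..a, p0 u)
    (tendsto_integral_hazardDensity_mul hβc hβnn hβdiv hβ0 hp0int hp0nn hp0supp hβI0)
    (tendsto_hazardDensity_mul_sub hβnn hβ0 hp0int hp0nn hp0supp hβI0)
    ((hazardDensity.continuous hβc).isBoundedUnder_norm_of_tendsto_zero
      (hazardDensity.tendsto_atBot hβ0) hβI0)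
  have hε' := Metric.tendsto_nhds.1 hI ε hε
  rw [← principal_univ, eventually_prod_principal_iff] at hε'
  obtain ⟨T₀, hT₀⟩ := eventually_atTop.1 hε'
  refine ⟨T₀, fun T hT a _ => ?_⟩
  simp_rw [integral_mul_eq_hazardDensity_mul hβc hβ0 hp0supp hp]
  exact (Real.dist_0_eq_abs _).symm.trans_lt (hT₀ T hT a (mem_univ a))

theorem imt_distribution_uniform_convergence
    (β p0 : ℝ → ℝ) (t0 : ℝ) (ht0 : 0 < t0)
    (hβc : Continuous β) (hβnn : ∀ a, 0 ≤ β a)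
    (hβdiv : Tendsto (fun a => ∫ x in (0:ℝ)..a, β x) atTop atTop)
    (hβ0 : ∀ a, a ≤ t0 → β a = 0)
    (hp0int : Integrable p0) (hp0nn : ∀ a, 0 ≤ p0 a)
    (hp0supp : ∀ a, a < 0 ∨ t0 < a → p0 a = 0)
    (hp0pos : 0 < ∫ a in Set.Ioi (0:ℝ), p0 a)
    (p : ℝ → ℝ → ℝ)
    (hp : ∀ t a, p t a = p0 (a - t) * Real.exp (-∫ s in (0:ℝ)..t, β (a - s)))
    (hβI0 : Tendsto (fun a => β a * Real.exp (-∫ x in (0:ℝ)..a, β x))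
      atTop (nhds 0)) :
    ∀ ε > (0:ℝ), ∃ T₀ : ℝ, ∀ T ≥ T₀, ∀ a ≥ (0:ℝ),
      |(∫ x in Set.Ioi (0:ℝ), ∫ t in (0:ℝ)..T, β x * p t x)⁻¹ *
          (∫ t in (0:ℝ)..T, β a * p t a)
        - β a * Real.exp (-∫ x in (0:ℝ)..a, β x)| < ε :=
  imt_distribution_uniform_convergence_general β p0 t0 hβc hβnn hβdiv hβ0 hp0int hp0nn hp0supp
    hp0pos p hp hβI0
end
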